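/- Let A be an n×n row-stochastic, irreducible and aperiodic matrix (equivalently: some power Aᵐ has all positive entries). Then det(I − A^{∨2}) ≠ 0, i.e., 1 is not an eigenvalue of the zeon square A^{∨2}. -/

import Mathlib

open Matrix BigOperators Filter

/-- Index set of pairs `(i,j)` with `i < j`. -/
abbrev Pairs (n : ℕ) := {p : Fin n × Fin n // p.1 < p.2}

/-- Zeon second power: matrix of 2×2 permanents. -/
def zeonSq {n : ℕ} {R : Type*} [CommRing R] (A : Matrix (Fin n) (Fin n) R) :
    Matrix (Pairs n) (Pairs n) R :=
  Matrix.of fun I J =>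
    A I.1.1 J.1.1 * A I.1.2 J.1.2 + A I.1.1 J.1.2 * A I.1.2 J.1.1

/-- `Mat(X)`: symmetric matrix with zero diagonal built from a vector indexed by pairs. -/
def matOf {n : ℕ} {R : Type*} [CommRing R] (X : Pairs n → R) :
    Matrix (Fin n) (Fin n) R :=
  Matrix.of fun i j =>
    if h : i < j then X ⟨(i, j), h⟩ else if h' : j < i then X ⟨(j, i), h'⟩ else 0

/-!
A vector `v` fixed by `A^{∨2}` gives the symmetric zero-diagonal matrix `W = Mat(v)` with
`W = offDiag (A W Aᵀ)`. Let `M = max |W_ij|` and `P = Aᵐ > 0`. Iterating `m` times and bounding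
entrywise, `|W| ≤ P (M (J - I)) Pᵀ = M (J - P Pᵀ)` (`J` the all-ones matrix) because `P` is
stochastic; as `(P Pᵀ)_ij > 0`, every `|W_ij| < M`, so `W = 0` and `v = 0`.
-/

open Finset

section Comparison

variable {l m n o R : Type*} [Fintype m] [Fintype n] [CommRing R] [LinearOrder R]
  [IsStrictOrderedRing R]

lemma abs_dotProduct_le {a x y : m → R} (ha : ∀ i, 0 ≤ a i) (hxy : ∀ i, |x i| ≤ y i) :
    |a ⬝ᵥ x| ≤ a ⬝ᵥ y :=
  (abs_sum_le_sum_abs _ _).trans <| sum_le_sum fun i _ => by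
    rw [abs_mul, abs_of_nonneg (ha i)]
    exact mul_le_mul_of_nonneg_left (hxy i) (ha i)

lemma abs_mul_mul_apply_le {A : Matrix l m R} {X Y : Matrix m n R} {B : Matrix n o R}
    (hA : ∀ i j, 0 ≤ A i j) (hB : ∀ i j, 0 ≤ B i j) (hXY : ∀ p q, |X p q| ≤ Y p q)
    (i : l) (j : o) : |(A * X * B) i j| ≤ (A * Y * B) i j := by
  have hAX : ∀ k, |(A * X) i k| ≤ (A * Y) i k := fun k => by
    simpa only [mul_apply'] using abs_dotProduct_le (hA i) fun r => hXY r k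
  simpa only [mul_apply', dotProduct_comm _ fun k => B k j] using
    abs_dotProduct_le (fun k => hB k j) hAX

end Comparison

section OffDiagConj

variable {ι R : Type*} [Fintype ι] [DecidableEq ι]

def offDiagConj [Semiring R] (A X : Matrix ι ι R) : Matrix ι ι R :=
  of fun i j => if i = j then 0 else (A * X * Aᵀ) i j

lemma offDiagConj_apply [Semiring R] (A X : Matrix ι ι R) (i j : ι) :
    offDiagConj A X i j = if i = j then 0 else (A * X * Aᵀ) i j :=
  rfl

variable [CommRing R] [LinearOrder R] [IsStrictOrderedRing R]

lemma abs_offDiagConj_iterate_apply_le {A X Y : Matrix ι ι R} (hA : ∀ i j, 0 ≤ A i j)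
    (hXY : ∀ k l, |X k l| ≤ Y k l) (m : ℕ) (i j : ι) :
    |((offDiagConj A)^[m] X) i j| ≤ (A ^ m * Y * (A ^ m)ᵀ) i j := by
  induction m generalizing i j with
  | zero => simpa using hXY i j
  | succ m ih =>
    have hconj : A ^ (m + 1) * Y * (A ^ (m + 1))ᵀ = A * (A ^ m * Y * (A ^ m)ᵀ) * Aᵀ := by
      simp only [pow_succ', transpose_mul, Matrix.mul_assoc]
    rw [Function.iterate_succ_apply', hconj]
    refine le_trans ?_ (abs_mul_mul_apply_le hA (fun k l => hA l k) ih i j)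
    rw [offDiagConj_apply]
    split_ifs
    · rw [abs_zero]
      exact abs_nonneg _
    · exact le_rfl

lemma mul_offDiagOnes_mul_transpose {P : Matrix ι ι R} (hP : P ∈ rowStochastic R ι) :
    P * (vecMulVec 1 1 - 1) * Pᵀ = vecMulVec 1 1 - P * Pᵀ := by
  rw [Matrix.mul_sub, Matrix.sub_mul, Matrix.mul_one, mul_vecMulVec, vecMulVec_mul,
    vecMul_transpose, hP.2]

lemma eq_zero_of_offDiagConj_eq_self {A W : Matrix ι ι R} (hA : A ∈ rowStochastic R ι)
    (hprim : ∃ m, ∀ i j, 0 < (A ^ m) i j) (hdiag : ∀ i, W i i = 0)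
    (hW : offDiagConj A W = W) : W = 0 := by
  obtain ⟨m, hm⟩ := hprim
  by_contra hne
  obtain ⟨i₀, j₀, hij₀⟩ : ∃ i j, W i j ≠ 0 := by
    by_contra! h
    exact hne (ext h)
  have : Nonempty (ι × ι) := ⟨(i₀, j₀)⟩
  obtain ⟨p, hp⟩ := Finite.exists_max fun p : ι × ι => |W p.1 p.2|
  set M := |W p.1 p.2|
  have hM : 0 < M := (abs_pos.2 hij₀).trans_le (hp (i₀, j₀))
  have hbound : ∀ k l, |W k l| ≤ (M • (vecMulVec 1 1 - 1) : Matrix ι ι R) k l := by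
    intro k l
    by_cases hkl : k = l
    · simp [hkl, hdiag]
    · simpa [hkl, vecMulVec_apply] using hp (k, l)
  have key := abs_offDiagConj_iterate_apply_le hA.1 hbound m p.1 p.2
  rw [Function.iterate_fixed hW, Matrix.mul_smul, Matrix.smul_mul,
    mul_offDiagOnes_mul_transpose (pow_mem hA m)] at key
  have hpos : 0 < (A ^ m * (A ^ m)ᵀ) p.1 p.2 :=
    sum_pos (fun k _ => mul_pos (hm _ _) (hm _ _)) ⟨p.1, mem_univ _⟩
  simp only [Matrix.smul_apply, Matrix.sub_apply, vecMulVec_apply, Pi.one_apply, mul_one,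
    smul_eq_mul] at key
  nlinarith

end OffDiagConj

section Zeon

variable {n : ℕ} {R : Type*} [CommRing R]

def upperOf (v : Pairs n → R) : Matrix (Fin n) (Fin n) R :=
  of fun i j => if h : i < j then v ⟨(i, j), h⟩ else 0

lemma matOf_eq_upperOf_add_transpose (v : Pairs n → R) :
    matOf v = upperOf v + (upperOf v)ᵀ := by
  ext i j
  rcases lt_trichotomy i j with h | rfl | h
  · simp [matOf, upperOf, h, h.not_gt]
  · simp [matOf, upperOf]
  · simp [matOf, upperOf, h, h.not_gt]

lemma mul_upperOf_mul_transpose_apply (A B : Matrix (Fin n) (Fin n) R) (v : Pairs n → R)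
    (i j : Fin n) : (A * upperOf v * Bᵀ) i j = ∑ J : Pairs n, A i J.1.1 * B j J.1.2 * v J := by
  set f : Fin n → Fin n → R := fun k l => A i k * B j l * upperOf v k l
  calc (A * upperOf v * Bᵀ) i j = ∑ k, ∑ l, f k l := by
        simp only [f, mul_apply, transpose_apply, sum_mul]
        rw [sum_comm]
        exact sum_congr rfl fun k _ => sum_congr rfl fun l _ => by ring
    _ = ∑ q ∈ univ.filter (fun q : Fin n × Fin n => q.1 < q.2), f q.1 q.2 := by
        rw [← Fintype.sum_prod_type' f, sum_filter_of_ne]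
        intro q _ h
        by_contra hq
        simp [f, upperOf, hq] at h
    _ = ∑ J : Pairs n, A i J.1.1 * B j J.1.2 * v J := by
        rw [sum_subtype (p := fun q : Fin n × Fin n => q.1 < q.2) _ (by simp)]
        exact sum_congr rfl fun J _ => by simp [f, upperOf, J.2]

lemma zeonSq_mulVec_apply (A : Matrix (Fin n) (Fin n) R) (v : Pairs n → R) (I : Pairs n) :
    (zeonSq A *ᵥ v) I
      = (A * upperOf v * Aᵀ) I.1.1 I.1.2 + (A * upperOf v * Aᵀ) I.1.2 I.1.1 := by
  simp only [mul_upperOf_mul_transpose_apply, mulVec, dotProduct, zeonSq, of_apply,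
    ← sum_add_distrib]
  exact sum_congr rfl fun J _ => by ring

lemma mul_matOf_mul_transpose_apply (A : Matrix (Fin n) (Fin n) R) (v : Pairs n → R)
    (i j : Fin n) :
    (A * matOf v * Aᵀ) i j = (A * upperOf v * Aᵀ) i j + (A * upperOf v * Aᵀ) j i := by
  have hsymm : A * (upperOf v)ᵀ * Aᵀ = (A * upperOf v * Aᵀ)ᵀ := by
    simp only [transpose_mul, transpose_transpose, Matrix.mul_assoc]
  rw [matOf_eq_upperOf_add_transpose, Matrix.mul_add, Matrix.add_mul, Matrix.add_apply, hsymm,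
    transpose_apply]

lemma offDiagConj_matOf (A : Matrix (Fin n) (Fin n) R) (v : Pairs n → R) :
    offDiagConj A (matOf v) = matOf (zeonSq A *ᵥ v) := by
  ext i j
  rcases lt_trichotomy i j with h | rfl | h
  · rw [offDiagConj_apply, if_neg h.ne, mul_matOf_mul_transpose_apply]
    simp [matOf, h, zeonSq_mulVec_apply]
  · simp [offDiagConj_apply, matOf]
  · rw [offDiagConj_apply, if_neg h.ne', mul_matOf_mul_transpose_apply]
    simp [matOf, h, h.not_gt, zeonSq_mulVec_apply, add_comm]

lemma matOf_apply_self (v : Pairs n → R) (i : Fin n) : matOf v i i = 0 := by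
  simp [matOf]

lemma eq_zero_of_matOf_eq_zero {v : Pairs n → R} (h : matOf v = 0) : v = 0 := by
  funext J
  simpa [matOf, J.2] using congr_fun₂ h J.1.1 J.1.2

end Zeon

theorem stmt17 {n : ℕ} (A : Matrix (Fin n) (Fin n) ℚ)
    (hA0 : ∀ i j, 0 ≤ A i j) (hA1 : ∀ i, ∑ j, A i j = 1)
    (hqp : ∃ m, ∀ i j, 0 < (A ^ m) i j) :
    (1 - zeonSq A).det ≠ 0 := by
  intro hdet
  obtain ⟨v, hv0, hv⟩ := exists_mulVec_eq_zero_iff.2 hdet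
  rw [sub_mulVec, one_mulVec, sub_eq_zero, eq_comm] at hv
  have hW : offDiagConj A (matOf v) = matOf v := by rw [offDiagConj_matOf, hv]
  have hA : A ∈ rowStochastic ℚ (Fin n) := mem_rowStochastic_iff_sum.2 ⟨hA0, hA1⟩
  exact hv0 (eq_zero_of_matOf_eq_zero
    (eq_zero_of_offDiagConj_eq_self hA hqp (matOf_apply_self v) hW))
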